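/- arXiv:1702.08524 — 7 statements merged into one kernel-verified Lean document; each statement's English description precedes it below -/
import Mathlib

section
/- Let N ∈ ℕ with N ≥ 1 and let L ∈ Matrix (Fin N) (Fin N) ℂ satisfy L·𝟙 = 0, where 𝟙 ∈ ℂ^N is the all-ones vector. Let ℓ₁ denote the first row of L and let 𝟙ℓ₁ denote the N×N rank-one matrix whose (i,j) entry is (ℓ₁)_j. Then the characteristic polynomial of 𝟙ℓ₁ − L equals the characteristic polynomial of −L; in particular the spectrum of 𝟙ℓ₁ − L (with algebraic multiplicities) equals the spectrum of −L. -/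
open Matrix Polynomial

/-- If `L · 𝟙 = 0`, then the characteristic polynomial of `𝟙ℓ₁ − L` (where `𝟙ℓ₁` is the
rank-one matrix all of whose rows equal the first row `ℓ₁` of `L`) equals the
characteristic polynomial of `−L`; in particular their spectra with algebraic
multiplicities coincide. -/
theorem stmt_1 (N : ℕ) (hN : 1 ≤ N) (L : Matrix (Fin N) (Fin N) ℂ)
    (hL : L *ᵥ (fun _ => (1 : ℂ)) = 0) :
    (Matrix.of (fun _ j => L ⟨0, hN⟩ j) - L).charpoly = (-L).charpoly := by
  classical
  set i0 : Fin N := ⟨0, hN⟩ with hi0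
  have hrow : ∀ i, (∑ j, L i j) = 0 := by
    intro i
    have := congrFun hL i
    simpa [Matrix.mulVec, dotProduct] using this
  have hrowC : ∀ i, (∑ j, (Polynomial.C (L i j) : ℂ[X])) = 0 := by
    intro i
    rw [← map_sum, hrow i, map_zero]
  set A : Matrix (Fin N) (Fin N) ℂ[X] :=
      charmatrix (Matrix.of (fun _ j => L i0 j) - L) with hA
  set B : Matrix (Fin N) (Fin N) ℂ[X] := charmatrix (-L) with hB
  set V : Matrix (Fin N) (Fin N) ℂ[X] :=
      Matrix.of (fun i j => if j = i0 ∧ i ≠ i0 then (1 : ℂ[X]) else 0) with hV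
  set P : Matrix (Fin N) (Fin N) ℂ[X] := 1 - V with hP
  set Q : Matrix (Fin N) (Fin N) ℂ[X] := 1 + V with hQ
  have hVmul : ∀ (M : Matrix (Fin N) (Fin N) ℂ[X]) i k,
      (V * M) i k = if i = i0 then 0 else M i0 k := by
    intro M i k
    simp only [Matrix.mul_apply, hV, Matrix.of_apply]
    by_cases hi : i = i0
    · simp [hi]
    · rw [Finset.sum_eq_single i0] <;> simp [hi]
      intro m hm
      simp [hm]
  have hVV : V * V = 0 := by
    refine Matrix.ext fun i j => ?_
    rw [hVmul]
    by_cases hi : i = i0 <;> simp [hi, hV]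
  have hPQ : P * Q = 1 := by
    rw [hP, hQ, sub_mul, one_mul, mul_add, mul_one, hVV]
    abel
  have hBapply : ∀ i j, B i j = (if i = j then (X : ℂ[X]) else 0) + Polynomial.C (L i j) := by
    intro i j
    rw [hB, charmatrix_apply]
    by_cases h : i = j <;> simp [h, Matrix.diagonal_apply, sub_eq_add_neg]
  have hBrowsum : ∀ i, (∑ j, B i j) = X := by
    intro i
    simp only [hBapply]
    rw [Finset.sum_add_distrib, hrowC, add_zero,
      Finset.sum_ite_eq Finset.univ i fun _ => (X : ℂ[X])]
    simp
  set E : Matrix (Fin N) (Fin N) ℂ[X] :=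
      Matrix.of (fun _ j => Polynomial.C (L i0 j)) with hE
  have hAB : A = B - E := by
    refine Matrix.ext fun i j => ?_
    rw [hA, Matrix.sub_apply, hBapply, charmatrix_apply]
    by_cases h : i = j <;>
      simp [h, hE, Matrix.diagonal_apply, map_sub, sub_eq_add_neg] <;> ring
  -- P * E * Q is supported on row i0
  set r : (Fin N) → ℂ[X] := fun j => ∑ k, Polynomial.C (L i0 k) * Q k j with hr
  have hPE : P * E = Matrix.of (fun i j => if i = i0 then Polynomial.C (L i0 j) else 0) := by
    refine Matrix.ext fun i j => ?_
    rw [hP, Matrix.sub_mul, Matrix.one_mul, Matrix.sub_apply, hVmul]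
    by_cases hi : i = i0 <;> simp [hi, hE]
  have hPEQ : P * E * Q = Matrix.of (fun i j => if i = i0 then r j else 0) := by
    refine Matrix.ext fun i j => ?_
    simp only [Matrix.mul_apply, hPE, Matrix.of_apply, hr]
    by_cases hi : i = i0 <;> simp [hi]
  have hQcol : ∀ k, Q k i0 = 1 := by
    intro k
    by_cases hk : k = i0 <;> simp [hQ, hV, Matrix.one_apply, hk]
  have hri0 : r i0 = 0 := by
    simp only [hr, hQcol, mul_one]
    exact hrowC i0
  have hPBQcol : ∀ i, i ≠ i0 → (P * B * Q) i i0 = 0 := by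
    intro i hi
    have hPB : ∀ k, (P * B) i k = B i k - B i0 k := by
      intro k
      rw [hP, Matrix.sub_mul, Matrix.one_mul, Matrix.sub_apply, hVmul, if_neg hi]
    simp only [Matrix.mul_apply, hQcol, mul_one, hPB]
    rw [Finset.sum_sub_distrib, hBrowsum, hBrowsum, sub_self]
  -- key det equality
  have hdetsub : (P * A * Q).det = (P * B * Q).det := by
    have h1 : P * A * Q = P * B * Q - P * E * Q := by
      rw [hAB]; noncomm_ring
    have h2 : P * A * Q =
        Matrix.updateRow (P * B * Q) i0 (fun j => (P * B * Q) i0 j + (- r j)) := by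
      rw [h1]
      refine Matrix.ext fun i j => ?_
      by_cases hi : i = i0
      · subst hi
        simp [hPEQ, Matrix.updateRow_self, sub_eq_add_neg]
      · simp [hPEQ, Matrix.updateRow_ne hi, hi]
    have h3 : (Matrix.updateRow (P * B * Q) i0 (fun j => - r j)).det = 0 := by
      apply Matrix.det_eq_zero_of_column_eq_zero i0
      intro i
      by_cases hi : i = i0
      · subst hi; simp [Matrix.updateRow_self, hri0]
      · rw [Matrix.updateRow_ne hi]
        exact hPBQcol i hi
    rw [h2, show (fun j => (P * B * Q) i0 j + (- r j)) = ((P * B * Q) i0 + fun j => - r j)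
      from rfl, Matrix.det_updateRow_add, h3, add_zero, Matrix.updateRow_eq_self]
  have hconj : ∀ M : Matrix (Fin N) (Fin N) ℂ[X], (P * M * Q).det = M.det := by
    intro M
    rw [Matrix.det_mul, Matrix.det_mul]
    calc P.det * M.det * Q.det = P.det * Q.det * M.det := by ring
    _ = (P * Q).det * M.det := by rw [Matrix.det_mul]
    _ = M.det := by rw [hPQ, Matrix.det_one, one_mul]
  have : A.det = B.det := by
    rw [← hconj A, ← hconj B, hdetsub]
  simpa [Matrix.charpoly, hA, hB] using this
end

section
/- Let N ∈ ℕ with N ≥ 1, let L ∈ Matrix (Fin N) (Fin N) ℂ satisfy L·𝟙 = 0, let ℓ₁ be the first row of L and 𝟙ℓ₁ the rank-one matrix with every row equal to ℓ₁, and let K ∈ ℝ with K ≠ 0. Then the spectrum (set of eigenvalues) of the matrix I + (1/K)·(𝟙ℓ₁ − L) equals the image of the spectrum of L under the map λ ↦ 1 − λ/K. -/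
/-!
With `P = I - 𝟙eᵢᵀ` we have `L - 𝟙ℓᵢ = P L`, while `L P = L` because `L 𝟙 = 0`. Since `P L` and
`L P` have the same characteristic polynomial, `L - 𝟙ℓᵢ` and `L` have the same spectrum, and the
matrix of the theorem is the polynomial `1 - X / K` evaluated at `L - 𝟙ℓ₁`, so the spectral mapping
theorem finishes the proof.
-/

open Matrix Polynomial

namespace Matrix

variable {n R : Type*} [Fintype n] [DecidableEq n] [CommRing R]

theorem spectrum_mul_comm (A B : Matrix n n R) : spectrum R (A * B) = spectrum R (B * A) := by
  ext r
  simp only [mem_spectrum_iff_not_isUnit_eval_charpoly, charpoly_mul_comm]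

theorem spectrum_sub_replicateRow_row {L : Matrix n n R} (hL : L *ᵥ (fun _ => 1) = 0) (i : n) :
    spectrum R (L - replicateRow n (L i)) = spectrum R L := by
  set P : Matrix n n R := 1 - replicateRow n (Pi.single i 1)
  have hPL : P * L = L - replicateRow n (L i) := by
    rw [sub_mul, one_mul]
    congr 1
    ext a b
    simp [replicateRow_apply, mul_apply, Pi.single_apply]
  have hLP : L * P = L := by
    rw [mul_sub, mul_one, sub_eq_self]
    ext a b
    simpa [replicateRow_apply, mul_apply, ← Finset.sum_mul, mulVec, dotProduct]
      using congr_arg (· * (Pi.single i 1 : n → R) b) (congrFun hL a)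
  rw [← hPL, spectrum_mul_comm, hLP]

end Matrix

theorem stmt_2_general (N : ℕ) (hN : 1 ≤ N) (L : Matrix (Fin N) (Fin N) ℂ)
    (hL : L *ᵥ (fun _ => (1 : ℂ)) = 0) (K : ℝ) :
    spectrum ℂ ((1 : Matrix (Fin N) (Fin N) ℂ) +
        (1 / (K : ℂ)) • (Matrix.of (fun _ j => L ⟨0, hN⟩ j) - L)) =
      (fun z : ℂ => 1 - z / (K : ℂ)) '' spectrum ℂ L := by
  have : Nonempty (Fin N) := ⟨⟨0, hN⟩⟩
  set p : ℂ[X] := 1 - C (1 / (K : ℂ)) * X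
  have hp_aeval : aeval (L - replicateRow (Fin N) (L ⟨0, hN⟩)) p =
      1 + (1 / (K : ℂ)) • (Matrix.of (fun _ j => L ⟨0, hN⟩ j) - L) := by
    simp only [p, map_sub, map_one, map_mul, aeval_C, aeval_X, Algebra.algebraMap_eq_smul_one,
      smul_mul_assoc, one_mul]
    rw [sub_eq_add_neg, ← smul_neg, neg_sub]
    rfl
  have hp_eval : (fun z : ℂ => 1 - z / (K : ℂ)) = fun z => p.eval z := by
    funext z; simp [p, div_eq_inv_mul]
  rw [← hp_aeval, hp_eval, ← spectrum_sub_replicateRow_row hL ⟨0, hN⟩]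
  exact spectrum.map_polynomial_aeval_of_nonempty _ _
    (spectrum.nonempty_of_isAlgClosed_of_finiteDimensional ℂ _)

/-- If `L · 𝟙 = 0` and `K ≠ 0`, then the spectrum of `I + (1/K)(𝟙ℓ₁ − L)` equals the image
of the spectrum of `L` under `λ ↦ 1 − λ/K`. -/
theorem stmt_2 (N : ℕ) (hN : 1 ≤ N) (L : Matrix (Fin N) (Fin N) ℂ)
    (hL : L *ᵥ (fun _ => (1 : ℂ)) = 0) (K : ℝ) (hK : K ≠ 0) :
    spectrum ℂ ((1 : Matrix (Fin N) (Fin N) ℂ) +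
        (1 / (K : ℂ)) • (Matrix.of (fun _ j => L ⟨0, hN⟩ j) - L)) =
      (fun z : ℂ => 1 - z / (K : ℂ)) '' spectrum ℂ L :=
  stmt_2_general N hN L hL K
end

section
/- Let N ∈ ℕ with N ≥ 1, let L ∈ Matrix (Fin N) (Fin N) ℂ satisfy L·𝟙 = 0, suppose 0 is a root of the characteristic polynomial of L with algebraic multiplicity exactly 1, and let K > 0 be a real number such that every nonzero eigenvalue λ of L satisfies |λ|² < 2·K·Re(λ). Let ℓ₁ be the first row of L, 𝟙ℓ₁ the rank-one matrix with every row equal to ℓ₁, and A := I + (1/K)·(𝟙ℓ₁ − L). Then 1 is a root of the characteristic polynomial of A with algebraic multiplicity exactly 1, and every eigenvalue μ of A with μ ≠ 1 satisfies |μ| < 1. -/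
/-!
Write `ℓ` for the first row of `L`. Since `L 𝟙 = 0`, also `ℓ ⬝ 𝟙 = 0`, and the rank-one
perturbation `L - 𝟙ℓ` has the same characteristic polynomial as `L`: for `s ≠ 0` the vector `𝟙`
is an eigenvector of `sI - L` with eigenvalue `s`, so the matrix determinant lemma gives
`det (sI - L + 𝟙ℓ) = det (sI - L)`. As `A = I - K⁻¹ (L - 𝟙ℓ)`, the characteristic polynomial of
`A` is, up to a nonzero constant, `χ_L (K (1 - X))`. Hence `1` is an eigenvalue of `A` of the same
multiplicity as the eigenvalue `0` of `L`, and any other eigenvalue `μ` of `A` yields the nonzero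
eigenvalue `K (1 - μ)` of `L`; the gain condition then reads `|1 - μ|² < 2 Re (1 - μ)`, which is
`|μ|² < 1`.
-/

open Matrix Polynomial

theorem Matrix.det_add_vecMulVec_of_mulVec_eq_smul {F n : Type*} [Field F]
    [Fintype n] [DecidableEq n] {B : Matrix n n F} {u : n → F} {c : F} (hc : c ≠ 0)
    (hBu : B *ᵥ u = c • u) (v : n → F) :
    (B + vecMulVec u v).det = B.det * (1 + c⁻¹ * (v ⬝ᵥ u)) := by
  have hfactor : B + vecMulVec u v = B * (1 + vecMulVec (c⁻¹ • u) v) := by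
    rw [Matrix.mul_add, Matrix.mul_one, mul_vecMulVec, mulVec_smul, hBu, smul_smul,
      inv_mul_cancel₀ hc, one_smul]
  rw [hfactor, det_mul, vecMulVec_eq Unit, det_one_add_replicateCol_mul_replicateRow,
    dotProduct_smul, smul_eq_mul]

theorem Matrix.charpoly_add_vecMulVec {F n : Type*} [Field F] [Infinite F]
    [Fintype n] [DecidableEq n] {L : Matrix n n F} {u v : n → F}
    (hLu : L *ᵥ u = 0) (hvu : v ⬝ᵥ u = 0) :
    (L + vecMulVec u v).charpoly = L.charpoly := by
  refine eq_of_infinite_eval_eq _ _ ((Set.finite_singleton 0).infinite_compl.mono ?_)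
  intro s (hs : s ≠ 0)
  have hshift : (scalar n s - L) *ᵥ u = s • u := by
    ext i
    simp [sub_mulVec, hLu]
  have hneg : scalar n s - (L + vecMulVec u v) = scalar n s - L + vecMulVec u (-v) := by
    rw [vecMulVec_neg]
    abel
  simp only [Set.mem_ofPred_eq, eval_charpoly, hneg,
    det_add_vecMulVec_of_mulVec_eq_smul hs hshift, neg_dotProduct, hvu,
    neg_zero, mul_zero, add_zero, mul_one]

theorem Matrix.charpoly_scalar_add_smul {F n : Type*} [Field F] [Infinite F]
    [Fintype n] [DecidableEq n] (M : Matrix n n F) (b : F) {t : F} (ht : t ≠ 0) :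
    (scalar n b + t • M).charpoly =
      C (t ^ Fintype.card n) * M.charpoly.comp (C t⁻¹ * X + C (-(t⁻¹ * b))) := by
  refine Polynomial.funext fun x => ?_
  have hsmul : scalar n x - (scalar n b + t • M) = t • (scalar n (t⁻¹ * x + -(t⁻¹ * b)) - M) := by
    ext i j
    by_cases h : i = j
    · simp only [scalar_apply, h, Matrix.sub_apply, diagonal_apply_eq, Matrix.add_apply,
        Matrix.smul_apply, smul_eq_mul]
      field_simp
      ring
    · simp [h]
  rw [eval_charpoly, hsmul, det_smul, eval_mul, eval_C, eval_comp, eval_charpoly]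
  simp

theorem Complex.norm_one_sub_lt_one {w : ℂ} (h : ‖w‖ ^ 2 < 2 * w.re) : ‖1 - w‖ < 1 := by
  have hsq : ‖1 - w‖ ^ 2 = 1 - 2 * w.re + ‖w‖ ^ 2 := by
    simp only [Complex.sq_norm, Complex.normSq_apply, Complex.sub_re, Complex.sub_im,
      Complex.one_re, Complex.one_im]
    ring
  exact (sq_lt_one_iff₀ (norm_nonneg _)).1 (by linarith)

theorem Polynomial.rootMultiplicity_C_mul_comp_C_mul_X_add_C {F : Type*} [Field F] (p : F[X])
    {c a : F} (hc : c ≠ 0) (ha : a ≠ 0) (b x : F) :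
    (C c * p.comp (C a * X + C b)).rootMultiplicity x = p.rootMultiplicity (a * x + b) := by
  rcases eq_or_ne p 0 with rfl | hp
  · simp
  have hcomp : p.comp (C a * X + C b) ≠ 0 := by
    rw [Ne, comp_eq_zero_iff]
    rintro (h | ⟨-, h⟩)
    · exact hp h
    · simpa [coeff_C, ha] using congrArg (coeff · 1) h
  rw [rootMultiplicity_mul (mul_ne_zero (C_ne_zero.2 hc) hcomp), rootMultiplicity_C, zero_add,
    rootMultiplicity_comp_C_mul_X_add_C p a b x ha.isUnit]

/-- If `L·𝟙 = 0`, `0` is a simple root of the characteristic polynomial of `L`, and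
`K > 0` satisfies `|λ|² < 2K·Re λ` for every nonzero eigenvalue `λ` of `L`, then
`A := I + (1/K)(𝟙ℓ₁ − L)` has `1` as a simple root of its characteristic polynomial and
all its other eigenvalues in the open unit disc. -/
theorem stmt_4 (N : ℕ) (hN : 1 ≤ N) (L : Matrix (Fin N) (Fin N) ℂ)
    (hL : L *ᵥ (fun _ => (1 : ℂ)) = 0)
    (h0 : (Matrix.charpoly L).rootMultiplicity 0 = 1)
    (K : ℝ) (hK : 0 < K)
    (hgain : ∀ z ∈ spectrum ℂ L, z ≠ 0 → ‖z‖ ^ 2 < 2 * K * z.re)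
    (A : Matrix (Fin N) (Fin N) ℂ)
    (hA : A = (1 : Matrix (Fin N) (Fin N) ℂ) +
        (1 / (K : ℂ)) • (Matrix.of (fun _ j => L ⟨0, hN⟩ j) - L)) :
    (Matrix.charpoly A).rootMultiplicity 1 = 1 ∧
      ∀ μ ∈ spectrum ℂ A, μ ≠ 1 → ‖μ‖ < 1 := by
  set ℓ : Fin N → ℂ := fun j => L ⟨0, hN⟩ j
  have hK0 : (K : ℂ) ≠ 0 := Complex.ofReal_ne_zero.2 hK.ne'
  have ht : -(K : ℂ)⁻¹ ≠ 0 := neg_ne_zero.2 (inv_ne_zero hK0)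
  have hℓ : -ℓ ⬝ᵥ (fun _ => (1 : ℂ)) = 0 := by
    simpa [ℓ, mulVec, dotProduct] using congrFun hL ⟨0, hN⟩
  have hA' : A = scalar (Fin N) 1 + (-(K : ℂ)⁻¹) •
      (L + vecMulVec (fun _ => (1 : ℂ)) (-ℓ)) := by
    have hrows : (of fun _ => ℓ : Matrix (Fin N) (Fin N) ℂ) = vecMulVec (fun _ => 1) ℓ :=
      (one_vecMulVec ℓ).symm
    rw [hA, hrows, map_one, vecMulVec_neg, one_div]
    module
  have hchar : A.charpoly =
      C ((-(K : ℂ)⁻¹) ^ N) * L.charpoly.comp (C (-(K : ℂ)) * X + C (K : ℂ)) := by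
    rw [hA', charpoly_scalar_add_smul _ _ ht, charpoly_add_vecMulVec hL hℓ]
    simp
  have hc : (-(K : ℂ)⁻¹) ^ N ≠ 0 := pow_ne_zero _ ht
  refine ⟨?_, fun μ hμ hμ1 => ?_⟩
  · rw [hchar, rootMultiplicity_C_mul_comp_C_mul_X_add_C _ hc (neg_ne_zero.2 hK0)]
    simpa using h0
  · have hroot : K * (1 - μ) ∈ spectrum ℂ L := by
      rw [mem_spectrum_iff_isRoot_charpoly, hchar] at hμ
      rw [mem_spectrum_iff_isRoot_charpoly, mul_one_sub, sub_eq_neg_add, ← neg_mul]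
      simpa [hc] using hμ
    have hgap : K * (1 - μ) ≠ 0 := mul_ne_zero hK0 (sub_ne_zero.2 hμ1.symm)
    have hscaled := hgain _ hroot hgap
    rw [norm_mul, Complex.norm_real, Real.norm_of_nonneg hK.le, Complex.re_ofReal_mul] at hscaled
    have hw : ‖1 - μ‖ ^ 2 < 2 * (1 - μ).re :=
      lt_of_mul_lt_mul_left (a := K ^ 2) (by linarith [hscaled, mul_pow K ‖1 - μ‖ 2]) (sq_nonneg K)
    simpa using Complex.norm_one_sub_lt_one hw
end

section
/- Let N ∈ ℕ with N ≥ 1, let L ∈ Matrix (Fin N) (Fin N) ℂ satisfy L·𝟙 = 0, suppose 0 is a root of the characteristic polynomial of L with algebraic multiplicity exactly 1, and let K > 0 be a real number such that every nonzero eigenvalue λ of L satisfies |λ|² < 2·K·Re(λ). Let ℓ₁ be the first row of L, 𝟙ℓ₁ the rank-one matrix with every row equal to ℓ₁, and A := I + (1/K)·(𝟙ℓ₁ − L). Then there exist constants C > 0 and ρ ∈ (0,1) such that for every x ∈ ℂ^N with first coordinate x₁ = 0 and every k ∈ ℕ, ‖Aᵏ·x‖ ≤ C·ρᵏ·‖x‖.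 -/
/-!
The first row of `A` is that of the identity, so `A` preserves `{x₁ = 0}` and agrees there
with `B = A P`, where `P` kills the first coordinate; by Gelfand's formula it suffices that every
eigenvalue of `B` has modulus `< 1`. A nonzero eigenvalue `μ` of `B` has an eigenvector `v` with
`v₁ = 0` and `A v = μ v`, i.e. `L v = c 𝟙 + K (1 - μ) v`. If `μ = 1`, then `v` is a generalized null
vector of `L` independent of `𝟙`, against the simplicity of the eigenvalue `0`. Otherwise
`v + c / (K (1 - μ)) 𝟙` is an eigenvector of `L` for `λ = K (1 - μ)`, and the gain condition
`|λ|² < 2 K Re λ`, i.e. `|λ - K| < K`, says exactly `|μ| < 1`.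
-/

open Matrix Filter Asymptotics
open scoped NNReal ENNReal

section BanachAlgebra

variable {A : Type*} [NormedRing A] [NormedAlgebra ℂ A] [CompleteSpace A]

theorem isBigO_pow_of_spectralRadius_lt {a : A} {ρ : ℝ≥0} (h : spectralRadius ℂ a < ρ) :
    (fun n : ℕ => a ^ n) =O[atTop] fun n => (ρ : ℝ) ^ n := by
  refine IsBigO.of_bound' ?_
  filter_upwards [(spectrum.pow_norm_pow_one_div_tendsto_nhds_spectralRadius a).eventually_lt_const
    h, eventually_gt_atTop 0] with n hn hn0
  rw [ENNReal.ofReal_lt_iff_lt_toReal (by positivity) ENNReal.coe_ne_top, ENNReal.coe_toReal,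
    one_div, Real.rpow_inv_lt_iff_of_pos (norm_nonneg _) ρ.coe_nonneg (Nat.cast_pos.2 hn0),
    Real.rpow_natCast] at hn
  rw [Real.norm_of_nonneg (pow_nonneg ρ.coe_nonneg n)]
  exact hn.le

theorem exists_norm_pow_le_of_spectralRadius_lt_one (a : A) (h : spectralRadius ℂ a < 1) :
    ∃ C > (0 : ℝ), ∃ ρ ∈ Set.Ioo (0 : ℝ) 1, ∀ k : ℕ, ‖a ^ k‖ ≤ C * ρ ^ k := by
  obtain ⟨ρ, hρa, hρ1⟩ := exists_between h
  lift ρ to ℝ≥0 using ne_top_of_lt hρ1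
  obtain ⟨C, hC, hbound⟩ := bound_of_isBigO_nat_atTop (isBigO_pow_of_spectralRadius_lt hρa)
  have hρ0 : (0 : ℝ) < ρ := by exact_mod_cast pos_of_gt hρa
  refine ⟨C, hC, ρ, ⟨hρ0, by exact_mod_cast hρ1⟩, fun k => ?_⟩
  simpa [abs_of_pos hρ0] using hbound (pow_ne_zero k hρ0.ne')

end BanachAlgebra

theorem Complex.norm_lt_one_of_norm_sq_lt_two_mul_re {K : ℝ} {μ : ℂ}
    (h : ‖(K : ℂ) * (1 - μ)‖ ^ 2 < 2 * K * ((K : ℂ) * (1 - μ)).re) : ‖μ‖ < 1 := by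
  rw [Complex.sq_norm, Complex.normSq_apply] at h
  simp only [Complex.mul_re, Complex.mul_im, Complex.ofReal_re, Complex.ofReal_im, Complex.sub_re,
    Complex.sub_im, Complex.one_re, Complex.one_im] at h
  rw [← sq_lt_one_iff₀ (norm_nonneg μ), Complex.sq_norm, Complex.normSq_apply]
  by_contra! hge
  nlinarith [mul_nonneg (sq_nonneg K) (sub_nonneg.2 hge)]

section CoordKernelProj

variable {n R : Type*} [Fintype n] [DecidableEq n] [Semiring R] {i : n}

def coordKernelProj (i : n) : Matrix n n R := Matrix.diagonal (Function.update 1 i 0)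

theorem coordKernelProj_mulVec_apply_self (w : n → R) : (coordKernelProj i *ᵥ w) i = 0 := by
  simp [coordKernelProj, Matrix.mulVec_diagonal]

theorem coordKernelProj_mulVec_of_apply_eq_zero {w : n → R} (hw : w i = 0) :
    coordKernelProj i *ᵥ w = w := by
  ext j
  rcases eq_or_ne j i with rfl | hj
  · simp [coordKernelProj, Matrix.mulVec_diagonal, hw]
  · simp [coordKernelProj, Matrix.mulVec_diagonal, hj]

theorem pow_mul_coordKernelProj_mulVec {A : Matrix n n R} (hA : ∀ w, (A *ᵥ w) i = w i)
    {w : n → R} (hw : w i = 0) (k : ℕ) : (A * coordKernelProj i) ^ k *ᵥ w = A ^ k *ᵥ w := by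
  induction k generalizing w with
  | zero => rfl
  | succ k ih =>
    rw [pow_succ, pow_succ, ← mulVec_mulVec, ← mulVec_mulVec, ← mulVec_mulVec,
      coordKernelProj_mulVec_of_apply_eq_zero hw, ih ((hA w).trans hw)]

end CoordKernelProj

section Eigenvectors

variable {n 𝕜 : Type*} [Fintype n] [DecidableEq n] [Field 𝕜] {L : Matrix n n 𝕜} {i : n}
  {v : n → 𝕜}

theorem Matrix.mem_spectrum_iff_exists_mulVec_eq_smul {M : Matrix n n 𝕜} {μ : 𝕜} :
    μ ∈ spectrum 𝕜 M ↔ ∃ v ≠ 0, M *ᵥ v = μ • v := by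
  rw [← spectrum_toLin', ← Module.End.hasEigenvalue_iff_mem_spectrum]
  constructor
  · intro h
    obtain ⟨v, hv⟩ := h.exists_hasEigenvector
    exact ⟨v, hv.2, hv.apply_eq_smul⟩
  · rintro ⟨v, hv, hMv⟩
    exact Module.End.hasEigenvalue_of_hasEigenvector ⟨Module.End.mem_eigenspace_iff.2 hMv, hv⟩

theorem Matrix.exists_smul_eq_of_mulVec_mulVec_eq_zero (h0 : L.charpoly.rootMultiplicity 0 = 1)
    {u : n → 𝕜} (hu : u ≠ 0) (hLu : L *ᵥ u = 0) (hLv : L *ᵥ (L *ᵥ v) = 0) :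
    ∃ a : 𝕜, a • u = v := by
  set V := Module.End.maxGenEigenspace (toLin' L) 0
  have hV : Module.finrank 𝕜 V = 1 := by
    rw [LinearMap.finrank_maxGenEigenspace_zero_eq,
      ← Polynomial.rootMultiplicity_eq_natTrailingDegree', charpoly_toLin', h0]
  have huV : u ∈ V := (Module.End.mem_maxGenEigenspace _ _ _).2 ⟨1, by simpa using hLu⟩
  have hvV : v ∈ V := (Module.End.mem_maxGenEigenspace _ _ _).2 ⟨2, by simpa [pow_two] using hLv⟩
  obtain ⟨a, ha⟩ :=
    (finrank_eq_one_iff_of_nonzero' (⟨u, huV⟩ : V) (by simpa using hu)).1 hV ⟨v, hvV⟩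
  exact ⟨a, congrArg Subtype.val ha⟩

theorem exists_eigenvector_of_mem_spectrum_mul_coordKernelProj {A : Matrix n n 𝕜}
    (hA : ∀ w, (A *ᵥ w) i = w i) {μ : 𝕜} (hμ : μ ∈ spectrum 𝕜 (A * coordKernelProj i))
    (hμ0 : μ ≠ 0) : ∃ v ≠ 0, v i = 0 ∧ A *ᵥ v = μ • v := by
  obtain ⟨v, hv, hBv⟩ := mem_spectrum_iff_exists_mulVec_eq_smul.1 hμ
  have hvi : v i = 0 := by
    have h := congrFun hBv i
    rw [← mulVec_mulVec, hA, coordKernelProj_mulVec_apply_self, Pi.smul_apply, smul_eq_mul] at h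
    exact (mul_eq_zero.1 h.symm).resolve_left hμ0
  refine ⟨v, hv, hvi, ?_⟩
  rwa [← mulVec_mulVec, coordKernelProj_mulVec_of_apply_eq_zero hvi] at hBv

def errorMatrix (L : Matrix n n 𝕜) (i : n) (κ : 𝕜) : Matrix n n 𝕜 :=
  1 + (1 / κ) • (of (fun _ j => L i j) - L)

theorem errorMatrix_mulVec (κ : 𝕜) (w : n → 𝕜) :
    errorMatrix L i κ *ᵥ w = w + (1 / κ) • ((fun _ => L i ⬝ᵥ w) - L *ᵥ w) := by
  simp only [errorMatrix, add_mulVec, one_mulVec, smul_mulVec, sub_mulVec]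
  rfl

theorem errorMatrix_mulVec_apply_self (κ : 𝕜) (w : n → 𝕜) :
    (errorMatrix L i κ *ᵥ w) i = w i := by
  rw [errorMatrix_mulVec, Pi.add_apply, Pi.smul_apply, Pi.sub_apply]
  exact add_eq_left.2 (smul_eq_zero_of_right _ (sub_self _))

theorem mulVec_eq_of_errorMatrix_mulVec_eq_smul {κ μ : 𝕜} (hκ : κ ≠ 0)
    (h : errorMatrix L i κ *ᵥ v = μ • v) :
    L *ᵥ v = (L i ⬝ᵥ v) • (fun _ => 1) + (κ * (1 - μ)) • v := by
  ext j
  have hj := congrFun h j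
  simp only [errorMatrix_mulVec, Pi.add_apply, Pi.smul_apply, Pi.sub_apply, smul_eq_mul] at hj ⊢
  field_simp at hj
  linear_combination -hj

theorem eq_zero_of_mulVec_eq_smul_one (h0 : L.charpoly.rootMultiplicity 0 = 1)
    (hL : L *ᵥ (fun _ => 1) = 0) {c : 𝕜} (hv : L *ᵥ v = c • fun _ => 1) (hvi : v i = 0) :
    v = 0 := by
  obtain ⟨a, rfl⟩ := exists_smul_eq_of_mulVec_mulVec_eq_zero h0
    (Function.ne_iff.2 ⟨i, one_ne_zero⟩) hL (by rw [hv, mulVec_smul, hL, smul_zero])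
  obtain rfl : a = 0 := by simpa using hvi
  exact zero_smul _ _

theorem mem_spectrum_of_mulVec_eq_smul_one_add (hL : L *ᵥ (fun _ => 1) = 0) {c l : 𝕜}
    (hl : l ≠ 0) (hv : L *ᵥ v = c • (fun _ => 1) + l • v) (hv0 : v ≠ 0) (hvi : v i = 0) :
    l ∈ spectrum 𝕜 L := by
  refine mem_spectrum_iff_exists_mulVec_eq_smul.2 ⟨v + (c / l) • fun _ => 1, ?_, ?_⟩
  · intro hw
    have hc : c / l = 0 := by simpa [hvi] using congrFun hw i
    exact hv0 (by simpa [hc] using hw)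
  · rw [mulVec_add, mulVec_smul, hL, smul_zero, add_zero, hv, smul_add, smul_smul,
      mul_div_cancel₀ _ hl, add_comm]

end Eigenvectors

theorem norm_lt_one_of_errorMatrix_mulVec_eq_smul {n : Type*} [Fintype n] [DecidableEq n]
    {L : Matrix n n ℂ} {i : n} (hL : L *ᵥ (fun _ => 1) = 0)
    (h0 : L.charpoly.rootMultiplicity 0 = 1) {K : ℝ} (hK : K ≠ 0)
    (hgain : ∀ z ∈ spectrum ℂ L, z ≠ 0 → ‖z‖ ^ 2 < 2 * K * z.re) {μ : ℂ} {v : n → ℂ}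
    (hv0 : v ≠ 0) (hvi : v i = 0) (hAv : errorMatrix L i (K : ℂ) *ᵥ v = μ • v) : ‖μ‖ < 1 := by
  have hK0 : (K : ℂ) ≠ 0 := Complex.ofReal_ne_zero.2 hK
  have hLv := mulVec_eq_of_errorMatrix_mulVec_eq_smul hK0 hAv
  have hμ1 : μ ≠ 1 := by
    rintro rfl
    exact hv0 (eq_zero_of_mulVec_eq_smul_one h0 hL (by simpa using hLv) hvi)
  have hl : (K : ℂ) * (1 - μ) ≠ 0 := mul_ne_zero hK0 (sub_ne_zero.2 hμ1.symm)
  exact Complex.norm_lt_one_of_norm_sq_lt_two_mul_re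
    (hgain _ (mem_spectrum_of_mulVec_eq_smul_one_add hL hl hLv hv0 hvi) hl)

open scoped Matrix.Norms.L2Operator

theorem Matrix.norm_toEuclideanLin_apply_le {m n 𝕜 : Type*} [RCLike 𝕜] [Fintype m] [Fintype n]
    [DecidableEq n] (M : Matrix m n 𝕜) (x : EuclideanSpace 𝕜 n) :
    ‖toEuclideanLin M x‖ ≤ ‖M‖ * ‖x‖ :=
  (toEuclideanLin.trans LinearMap.toContinuousLinearMap M).le_opNorm x

/-- Under the spectral gain condition, the closed-loop matrix `A = I + (1/K)(𝟙ℓ₁ − L)`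
decays exponentially on the invariant subspace `{x : x₁ = 0}`: there are `C > 0` and
`ρ ∈ (0,1)` with `‖Aᵏ·x‖ ≤ C·ρᵏ·‖x‖` (Euclidean norm) for all such `x` and all `k`. -/
theorem stmt_6 (N : ℕ) (hN : 1 ≤ N) (L : Matrix (Fin N) (Fin N) ℂ)
    (hL : L *ᵥ (fun _ => (1 : ℂ)) = 0)
    (h0 : (Matrix.charpoly L).rootMultiplicity 0 = 1)
    (K : ℝ) (hK : 0 < K)
    (hgain : ∀ z ∈ spectrum ℂ L, z ≠ 0 → ‖z‖ ^ 2 < 2 * K * z.re)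
    (A : Matrix (Fin N) (Fin N) ℂ)
    (hA : A = (1 : Matrix (Fin N) (Fin N) ℂ) +
        (1 / (K : ℂ)) • (Matrix.of (fun _ j => L ⟨0, hN⟩ j) - L)) :
    ∃ C > (0 : ℝ), ∃ ρ ∈ Set.Ioo (0 : ℝ) 1,
      ∀ x : EuclideanSpace ℂ (Fin N), x ⟨0, hN⟩ = 0 →
        ∀ k : ℕ, ‖Matrix.toEuclideanLin (A ^ k) x‖ ≤ C * ρ ^ k * ‖x‖ := by
  set i : Fin N := ⟨0, hN⟩
  change A = errorMatrix L i K at hA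
  subst hA
  have hrow := errorMatrix_mulVec_apply_self (L := L) (i := i) (K : ℂ)
  have : Nonempty (Fin N) := ⟨i⟩
  have : CompleteSpace (Matrix (Fin N) (Fin N) ℂ) := FiniteDimensional.complete ℂ _
  set B := errorMatrix L i K * coordKernelProj i
  have hspec : ∀ μ ∈ spectrum ℂ B, ‖μ‖₊ < 1 := by
    intro μ hμ
    rcases eq_or_ne μ 0 with rfl | hμ0
    · simp
    obtain ⟨v, hv0, hvi, hAv⟩ := exists_eigenvector_of_mem_spectrum_mul_coordKernelProj hrow hμ hμ0
    exact_mod_cast norm_lt_one_of_errorMatrix_mulVec_eq_smul hL h0 hK.ne' hgain hv0 hvi hAv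
  have hsr : spectralRadius ℂ B < 1 := by
    simpa using spectrum.spectralRadius_lt_of_forall_lt (a := B) (r := 1) hspec
  obtain ⟨C, hC, ρ, hρ, hBk⟩ := exists_norm_pow_le_of_spectralRadius_lt_one B hsr
  refine ⟨C, hC, ρ, hρ, fun x hx k => ?_⟩
  have hk : toEuclideanLin (errorMatrix L i K ^ k) x = toEuclideanLin (B ^ k) x := by
    rw [toLpLin_apply, toLpLin_apply, ← pow_mul_coordKernelProj_mulVec hrow hx]
  calc ‖toEuclideanLin (errorMatrix L i K ^ k) x‖ = ‖toEuclideanLin (B ^ k) x‖ := by rw [hk]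
    _ ≤ ‖B ^ k‖ * ‖x‖ := norm_toEuclideanLin_apply_le _ _
    _ ≤ C * ρ ^ k * ‖x‖ := by gcongr; exact hBk k
end

section
/- Let N ∈ ℕ with N ≥ 2, let J ∈ Matrix (Fin N) (Fin N) ℂ be the all-ones matrix, and let L := N·I − J (the Laplacian of the unweighted complete graph on N vertices). Let ℓ₁ be the first row of L and 𝟙ℓ₁ the rank-one matrix with every row equal to ℓ₁. Then for every x ∈ ℂ^N with first coordinate x₁ = 0, (I + (1/N)·(𝟙ℓ₁ − L))·x = 0. In particular, for the gain choice K = N, the closed-loop error dynamics x⁺ = (I + (1/K)(𝟙ℓ₁ − L))·x on the subspace {x₁ = 0} reach the origin in exactly one time-step (deadbeat synchronization). -/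
open Matrix

namespace Matrix

variable {n R : Type*} [DecidableEq n]

/-- The equal rows of `J` in `L = K • 1 - J` cancel in `𝟙ℓᵢ₀ - L`. -/
theorem replicateRow_row_sub_smul_one_sub_replicateRow [Ring R] (K : R) (v : n → R) (i₀ : n) :
    replicateRow n ((K • 1 - replicateRow n v) i₀) - (K • 1 - replicateRow n v) =
      K • (replicateRow n (Pi.single i₀ 1) - 1) := by
  ext i j
  simp only [sub_apply, replicateRow_apply, smul_apply, one_eq_pi_single, smul_eq_mul,
    mul_sub, Pi.single_apply]
  abel

theorem one_add_inv_smul_replicateRow_row_sub_eq [Field R] {K : R} (hK : K ≠ 0) (v : n → R)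
    (i₀ : n) :
    1 + K⁻¹ • (replicateRow n ((K • 1 - replicateRow n v) i₀) - (K • 1 - replicateRow n v)) =
      replicateRow n (Pi.single i₀ 1) := by
  rw [replicateRow_row_sub_smul_one_sub_replicateRow, smul_smul, inv_mul_cancel₀ hK, one_smul,
    add_sub_cancel]

theorem replicateRow_single_one_mulVec [Fintype n] [NonAssocSemiring R] (i₀ : n) (x : n → R) :
    replicateRow n (Pi.single i₀ 1) *ᵥ x = Function.const n (x i₀) := by
  rw [replicateRow_mulVec_eq_const, single_dotProduct, one_mul]

end Matrix

/-- Deadbeat synchronization: for the complete-graph Laplacian `L = N·I − J` and gain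
choice `K = N`, the closed-loop matrix `I + (1/N)(𝟙ℓ₁ − L)` annihilates every vector in
the subspace `{x : x₁ = 0}`, i.e. the error dynamics reach the origin in one step. -/
theorem stmt_10 (N : ℕ) (hN : 2 ≤ N)
    (J L : Matrix (Fin N) (Fin N) ℂ)
    (hJ : J = Matrix.of (fun _ _ => (1 : ℂ)))
    (hL : L = (N : ℂ) • (1 : Matrix (Fin N) (Fin N) ℂ) - J) :
    ∀ x : Fin N → ℂ, x ⟨0, by omega⟩ = 0 →
      ((1 : Matrix (Fin N) (Fin N) ℂ) +
          (1 / (N : ℂ)) • (Matrix.of (fun _ j => L ⟨0, by omega⟩ j) - L)) *ᵥ x = 0 := by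
  intro x hx
  subst hL hJ
  have hN0 : (N : ℂ) ≠ 0 := Nat.cast_ne_zero.mpr (by omega)
  have hclosed := one_add_inv_smul_replicateRow_row_sub_eq hN0 (1 : Fin N → ℂ) ⟨0, by omega⟩
  -- `J` and `Matrix.of fun _ j => L i₀ j` are `replicateRow`s by definition.
  calc _ = replicateRow (Fin N) (Pi.single ⟨0, by omega⟩ 1) *ᵥ x := by
        rw [one_div, ← hclosed]; rfl
    _ = 0 := by rw [replicateRow_single_one_mulVec, hx]; rfl
end

section
/- Let N ∈ ℕ with N ≥ 2 and let ε ∈ (0,1). Define T_s : ℝ → ℝ by T_s(K) := (log ε) / (log(|K − N|/K)). Then T_s is strictly decreasing on the interval (N/2, N) and strictly increasing on the interval (N, ∞). -/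
/-- The (un-rounded) ε settling time `T_s(K) = log ε / log(|K−N|/K)` is strictly
decreasing on `(N/2, N)` and strictly increasing on `(N, ∞)`. -/
theorem stmt_12 (N : ℕ) (hN : 2 ≤ N) (ε : ℝ) (hε : ε ∈ Set.Ioo (0 : ℝ) 1)
    (Ts : ℝ → ℝ) (hTs : ∀ K, Ts K = Real.log ε / Real.log (|K - N| / K)) :
    StrictAntiOn Ts (Set.Ioo ((N : ℝ) / 2) (N : ℝ)) ∧
      StrictMonoOn Ts (Set.Ioi (N : ℝ)) := by
  obtain ⟨hε0, hε1⟩ := hε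
  have hc : Real.log ε < 0 := Real.log_neg hε0 hε1
  have hNpos : (0 : ℝ) < N := by positivity
  -- key monotonicity: for x < y < 0, log ε / x < log ε / y
  have key : ∀ x y : ℝ, x < y → y < 0 → Real.log ε / x < Real.log ε / y := by
    intro x y hxy hy0
    have hx0 : x < 0 := hxy.trans hy0
    have h1 : 1 / y < 1 / x := (one_div_lt_one_div_of_neg hy0 hx0).mpr hxy
    have := mul_lt_mul_of_neg_left h1 hc
    rwa [mul_one_div, mul_one_div] at this
  constructor
  · intro a ha b hb hab
    obtain ⟨ha1, ha2⟩ := ha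
    obtain ⟨hb1, hb2⟩ := hb
    have hapos : (0 : ℝ) < a := lt_trans (by positivity) ha1
    have hbpos : (0 : ℝ) < b := lt_trans (by positivity) hb1
    have hrb : |b - (N : ℝ)| = (N : ℝ) - b := by
      rw [abs_of_neg (by linarith), neg_sub]
    have hra : |a - (N : ℝ)| = (N : ℝ) - a := by
      rw [abs_of_neg (by linarith), neg_sub]
    rw [hTs a, hTs b, hra, hrb]
    have h1 : ((N : ℝ) - b) / b < ((N : ℝ) - a) / a := by
      rw [div_lt_div_iff₀ hbpos hapos]; nlinarith
    have h2 : ((N : ℝ) - a) / a < 1 := by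
      rw [div_lt_one hapos]; linarith
    have hbN : (0 : ℝ) < ((N : ℝ) - b) / b := by
      apply div_pos (by linarith) hbpos
    have hlog1 : Real.log (((N : ℝ) - b) / b) < Real.log (((N : ℝ) - a) / a) :=
      Real.log_lt_log hbN h1
    have hlog2 : Real.log (((N : ℝ) - a) / a) < 0 :=
      Real.log_neg (hbN.trans h1) h2
    exact key _ _ hlog1 hlog2
  · intro a ha b hb hab
    simp only [Set.mem_Ioi] at ha hb
    have hapos : (0 : ℝ) < a := hNpos.trans ha
    have hbpos : (0 : ℝ) < b := hNpos.trans hb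
    have hra : |a - (N : ℝ)| = a - (N : ℝ) := abs_of_pos (by linarith)
    have hrb : |b - (N : ℝ)| = b - (N : ℝ) := abs_of_pos (by linarith)
    rw [hTs a, hTs b, hra, hrb]
    have h1 : (a - (N : ℝ)) / a < (b - (N : ℝ)) / b := by
      rw [div_lt_div_iff₀ hapos hbpos]; nlinarith
    have h2 : (b - (N : ℝ)) / b < 1 := by
      rw [div_lt_one hbpos]; linarith
    have haN : (0 : ℝ) < (a - (N : ℝ)) / a := div_pos (by linarith) hapos
    have hlog1 : Real.log ((a - (N : ℝ)) / a) < Real.log ((b - (N : ℝ)) / b) :=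
      Real.log_lt_log haN h1
    have hlog2 : Real.log ((b - (N : ℝ)) / b) < 0 :=
      Real.log_neg (haN.trans h1) h2
    exact key _ _ hlog1 hlog2
end

section
/- For every natural number N ≥ 19, 1 + √((N−1)² − ((1/2)·cot(π/(2N)))²) ≥ N/2. -/
open Real

/-- For `N ≥ 19`, the abscissa `σ₁₃ = 1 + √((N−1)² − ((1/2)cot(π/(2N)))²)` satisfies
`σ₁₃ ≥ N/2`. -/
theorem stmt_16 (N : ℕ) (hN : 19 ≤ N) :
    1 + Real.sqrt (((N : ℝ) - 1) ^ 2 - ((1 / 2) * Real.cot (π / (2 * N))) ^ 2) ≥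
      (N : ℝ) / 2 := by
  have hNR : (19 : ℝ) ≤ (N : ℝ) := by exact_mod_cast hN
  have hpi : (3.141592 : ℝ) < π := Real.pi_gt_d6
  set x : ℝ := π / (2 * N) with hx
  have hx0 : 0 < x := by positivity
  have hx2 : x < π / 2 := by
    rw [hx, div_lt_div_iff₀ (by positivity) (by norm_num)]
    nlinarith
  -- tan x > x, so cot x = 1/tan x < 1/x
  have htan : x < Real.tan x := Real.lt_tan hx0 hx2
  have hcot : Real.cot x < 1 / x := by
    rw [Real.cot_eq_cos_div_sin]
    have hsin : 0 < Real.sin x := Real.sin_pos_of_pos_of_lt_pi hx0 (by linarith [Real.pi_pos])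
    have hcos : 0 < Real.cos x := Real.cos_pos_of_mem_Ioo ⟨by linarith, hx2⟩
    rw [div_lt_div_iff₀ hsin hx0]
    have := htan
    rw [Real.tan_eq_sin_div_cos, lt_div_iff₀ hcos] at this
    linarith
  have hcotpos : 0 < Real.cot x := by
    rw [Real.cot_eq_cos_div_sin]
    exact div_pos (Real.cos_pos_of_mem_Ioo ⟨by linarith, hx2⟩)
      (Real.sin_pos_of_pos_of_lt_pi hx0 (by linarith [Real.pi_pos]))
  have hinvx : 1 / x = 2 * N / π := by
    rw [hx]; field_simp
  have hcot2 : ((1 / 2) * Real.cot x) ^ 2 ≤ ((N : ℝ) / π) ^ 2 := by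
    have h1 : (1 / 2) * Real.cot x ≤ (N : ℝ) / π := by
      have := hcot.le
      rw [hinvx] at this
      have h2 : (N : ℝ) / π = (2 * N / π) / 2 := by ring
      linarith
    nlinarith [hcotpos.le]
  have hkey : ((N : ℝ) / 2 - 1) ^ 2 ≤ ((N : ℝ) - 1) ^ 2 - ((1 / 2) * Real.cot x) ^ 2 := by
    have hNp2 : ((N : ℝ) / π) ^ 2 ≤ (N : ℝ) ^ 2 / 9 := by
      rw [div_pow, div_le_div_iff₀ (by positivity) (by norm_num)]
      have hpi2 : (9:ℝ) ≤ π ^ 2 := by nlinarith [Real.pi_gt_three]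
      nlinarith [mul_le_mul_of_nonneg_left hpi2 (sq_nonneg ((N:ℝ)))]
    nlinarith
  have := Real.sqrt_le_sqrt hkey
  rw [Real.sqrt_sq (by linarith)] at this
  linarith
end
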